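/- Fix constants c ≥ 1 and a > 0. There is a constant C = C(c,a) such that for all sufficiently large n the following holds. Let W be a nonnegative demand matrix on V = {1,…,n} that is super-sparse with witness set S ⊆ V×V: |S| ≤ (ln n)^c and Σ_{(u,v)∈S} W(u,v) ≥ (1 − a/ln n)·|W|. Assign to each node the B-LASLiN prediction 2 if it appears as a coordinate of some pair in S, and 1 otherwise. Then the expected total weighted path length of the resulting B-LASLiN network satisfies E[Σ_{u≠v} W(u,v)·d(u,v)] ≤ C·ln(ln n)·|W|, where |W| = Σ_{u,v} W(u,v). -/

import Mathlib

open scoped Classical ENNReal NNReal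
open MeasureTheory ProbabilityTheory

namespace P2P

variable {n : ℕ}

/-- Edge relation of a (continuous) skip list network: `u` and `v` are neighbors iff no node
strictly between them has height at least `min (h u) (h v)`. -/
def IsEdge {α : Type*} [LinearOrder α] (h : Fin n → α) (u v : Fin n) : Prop :=
  u ≠ v ∧ ∀ x : Fin n, min u v < x → x < max u v → h x < min (h u) (h v)

/-- The greedy next hop from `x` towards destination `v`. -/
noncomputable def nextHop {α : Type*} [LinearOrder α] (h : Fin n → α) (v x : Fin n) : Fin n :=
  if x < v then WithBot.unbotD x (Finset.univ.filter fun y => IsEdge h x y ∧ x < y ∧ y ≤ v).max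
  else if v < x then WithTop.untopD x (Finset.univ.filter fun y => IsEdge h x y ∧ v ≤ y ∧ y < x).min
  else x

/-- The greedy routing path from `x` to `v`, with fuel. -/
noncomputable def routeAux {α : Type*} [LinearOrder α] (h : Fin n → α) (v : Fin n) :
    ℕ → Fin n → List (Fin n)
  | 0, x => [x]
  | fuel + 1, x => if x = v then [x] else x :: routeAux h v fuel (nextHop h v x)

/-- The greedy routing path from `u` to `v` (as a list of visited nodes, starting at `u`
and ending at `v`). -/
noncomputable def route {α : Type*} [LinearOrder α] (h : Fin n → α) (u v : Fin n) :
    List (Fin n) :=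
  routeAux h v n u

/-- The routing path length (number of hops) from `u` to `v`. -/
noncomputable def dist {α : Type*} [LinearOrder α] (h : Fin n → α) (u v : Fin n) : ℕ :=
  (route h u v).length - 1


/-- The degree of `u`: its number of neighbors. -/
noncomputable def degree {α : Type*} [LinearOrder α] (h : Fin n → α) (u : Fin n) : ℕ :=
  (Finset.univ.filter fun w => IsEdge h u w).card

/-! ### Deterministic bound on route length -/

/-- `Pset h u v`: nodes strictly between `u` and `v` that are higher than everything from
`min u v` (inclusive) up to them. -/
noncomputable def Pset (h : Fin n → ℝ) (u v : Fin n) : Finset (Fin n) :=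
  (Finset.Ioo (min u v) (max u v)).filter fun x => ∀ z ∈ Finset.Ico (min u v) x, h z < h x

/-- `Qset h u v`: nodes strictly between `u` and `v` that are higher than everything from
them up to `max u v` (inclusive). -/
noncomputable def Qset (h : Fin n → ℝ) (u v : Fin n) : Finset (Fin n) :=
  (Finset.Ioo (min u v) (max u v)).filter fun x => ∀ z ∈ Finset.Ioc x (max u v), h z < h x

lemma routeAux_cons {α : Type*} [LinearOrder α] (h : Fin n → α) (v : Fin n) (fuel : ℕ)
    (x : Fin n) : ∃ l, routeAux h v fuel x = x :: l := by
  cases fuel with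
  | zero => exact ⟨[], rfl⟩
  | succ m =>
    by_cases hx : x = v
    · exact ⟨[], by simp [routeAux, hx]⟩
    · exact ⟨routeAux h v m (nextHop h v x), by rw [routeAux, if_neg hx]⟩

section Step

variable {h : Fin n → ℝ} {u v : Fin n}

/-- The step lemma, case `u < v`. -/
lemma step_lt (hinj : Function.Injective h) (huv : u < v) {x : Fin n} (hux : u ≤ x) (hxv : x < v)
    (hx : x = u ∨ x ∈ Pset h u v ∨ x ∈ Qset h u v) :
    x < nextHop h v x ∧ nextHop h v x ≤ v ∧
      (nextHop h v x = v ∨ nextHop h v x ∈ Pset h u v ∨ nextHop h v x ∈ Qset h u v) := by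
  have hminuv : min u v = u := min_eq_left huv.le
  have hmaxuv : max u v = v := max_eq_right huv.le
  set F := Finset.univ.filter fun y => IsEdge h x y ∧ x < y ∧ y ≤ v with hF
  have hFne : F.Nonempty := by
    have hxv' : (x : ℕ) + 1 < n := by
      have := hxv
      rw [Fin.lt_def] at this
      omega
    refine ⟨⟨(x : ℕ) + 1, hxv'⟩, Finset.mem_filter.mpr ⟨Finset.mem_univ _, ?_, ?_, ?_⟩⟩
    · constructor
      · intro hxe
        have := congrArg Fin.val hxe
        simp at this
      · intro z h1 h2
        exfalso
        have hlt : x < (⟨(x : ℕ) + 1, hxv'⟩ : Fin n) := by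
          rw [Fin.lt_def]; simp
        rw [min_eq_left hlt.le] at h1
        rw [max_eq_right hlt.le] at h2
        rw [Fin.lt_def] at h1 h2
        simp at h2
        omega
    · rw [Fin.lt_def]; simp
    · rw [Fin.le_def]
      have := hxv; rw [Fin.lt_def] at this
      simp; omega
  have hnext : nextHop h v x = F.max' hFne := by
    rw [nextHop, if_pos hxv, ← hF, ← Finset.coe_max' hFne, WithBot.unbotD_coe]
  obtain ⟨hedge, hxy, hyv⟩ := (Finset.mem_filter.mp (F.max'_mem hFne)).2
  set y := F.max' hFne with hy
  obtain ⟨hne_xy, hbet0⟩ := hedge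
  have hbet : ∀ z : Fin n, x < z → z < y → h z < h x ∧ h z < h y := by
    intro z h1 h2
    have := hbet0 z (by rwa [min_eq_left hxy.le]) (by rwa [max_eq_right hxy.le])
    exact lt_min_iff.mp this
  rw [hnext]
  refine ⟨hxy, hyv, ?_⟩
  by_cases hyv' : y = v
  · exact Or.inl hyv'
  have hyv2 : y < v := lt_of_le_of_ne hyv hyv'
  by_cases hcase : ∀ z ∈ Finset.Ioc y v, h z < h y
  · refine Or.inr (Or.inr ?_)
    rw [Qset, hminuv, hmaxuv]
    exact Finset.mem_filter.mpr ⟨Finset.mem_Ioo.mpr ⟨lt_of_le_of_lt hux hxy, hyv2⟩, hcase⟩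
  push_neg at hcase
  obtain ⟨z0, hz0mem, hz0⟩ := hcase
  have hz0y : y < z0 := (Finset.mem_Ioc.mp hz0mem).1
  have hyz0 : h y < h z0 :=
    lt_of_le_of_ne hz0 (fun e => (ne_of_lt hz0y) (hinj e))
  -- key claim: h x < h y
  have hxy_h : h x < h y := by
    by_contra hcon
    have hyx : h y < h x :=
      lt_of_le_of_ne (not_lt.mp hcon) (fun e => hne_xy (hinj e).symm)
    set S1 := (Finset.Ioc y v).filter (fun z => h y < h z) with hS1
    have hS1ne : S1.Nonempty := ⟨z0, Finset.mem_filter.mpr ⟨hz0mem, hyz0⟩⟩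
    set z1 := S1.min' hS1ne with hz1def
    obtain ⟨hz1Ioc, hz1h⟩ := Finset.mem_filter.mp (S1.min'_mem hS1ne)
    have hz1y : y < z1 := (Finset.mem_Ioc.mp hz1Ioc).1
    have hz1v : z1 ≤ v := (Finset.mem_Ioc.mp hz1Ioc).2
    have hxz1 : x < z1 := hxy.trans hz1y
    have hz1F : z1 ∈ F := by
      refine Finset.mem_filter.mpr ⟨Finset.mem_univ _, ⟨ne_of_lt hxz1, ?_⟩, hxz1, hz1v⟩
      intro w h1 h2
      rw [min_eq_left hxz1.le] at h1
      rw [max_eq_right hxz1.le] at h2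
      rw [lt_min_iff]
      rcases lt_trichotomy w y with hwy | rfl | hwy
      · obtain ⟨ha, hb⟩ := hbet w h1 hwy
        exact ⟨ha, hb.trans hz1h⟩
      · exact ⟨hyx, hz1h⟩
      · have hwS1 : w ∉ S1 := fun hw => absurd (S1.min'_le w hw) (not_le.mpr h2)
        have hwv : w ≤ v := h2.le.trans hz1v
        have : ¬ h y < h w := by
          intro hc
          exact hwS1 (Finset.mem_filter.mpr ⟨Finset.mem_Ioc.mpr ⟨hwy, hwv⟩, hc⟩)
        have hwy' : h w < h y :=
          lt_of_le_of_ne (not_lt.mp this) (fun e => (ne_of_lt hwy) (hinj e).symm)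
        exact ⟨hwy'.trans hyx, hwy'.trans hz1h⟩
    have := F.le_max' z1 hz1F
    rw [← hy] at this
    exact absurd this (not_le.mpr hz1y)
  -- now y ∈ Pset
  refine Or.inr (Or.inl ?_)
  rw [Pset, hminuv, hmaxuv]
  refine Finset.mem_filter.mpr ⟨Finset.mem_Ioo.mpr ⟨lt_of_le_of_lt hux hxy, hyv2⟩, ?_⟩
  intro z hz
  obtain ⟨huz, hzy⟩ := Finset.mem_Ico.mp hz
  rcases lt_trichotomy z x with h1 | rfl | h1
  · rcases hx with rfl | hxP | hxQ
    · exact absurd h1 (not_lt.mpr huz)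
    · have := (Finset.mem_filter.mp hxP).2 z
      rw [hminuv] at this
      exact (this (Finset.mem_Ico.mpr ⟨huz, h1⟩)).trans hxy_h
    · exfalso
      have := (Finset.mem_filter.mp hxQ).2 y
      rw [hmaxuv] at this
      exact absurd (this (Finset.mem_Ioc.mpr ⟨hxy, hyv⟩)) (not_lt.mpr hxy_h.le)
  · exact hxy_h
  · exact (hbet z h1 hzy).2

/-- The step lemma, case `v < u`. -/
lemma step_gt (hinj : Function.Injective h) (huv : v < u) {x : Fin n} (hux : x ≤ u) (hxv : v < x)
    (hx : x = u ∨ x ∈ Pset h u v ∨ x ∈ Qset h u v) :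
    nextHop h v x < x ∧ v ≤ nextHop h v x ∧
      (nextHop h v x = v ∨ nextHop h v x ∈ Pset h u v ∨ nextHop h v x ∈ Qset h u v) := by
  have hminuv : min u v = v := min_eq_right huv.le
  have hmaxuv : max u v = u := max_eq_left huv.le
  set F := Finset.univ.filter fun y => IsEdge h x y ∧ v ≤ y ∧ y < x with hF
  have hFne : F.Nonempty := by
    have hx0 : 0 < (x : ℕ) := by
      have := hxv; rw [Fin.lt_def] at this; omega
    have hxn : (x : ℕ) - 1 < n := lt_of_le_of_lt (Nat.sub_le _ _) x.isLt
    refine ⟨⟨(x : ℕ) - 1, hxn⟩, Finset.mem_filter.mpr ⟨Finset.mem_univ _, ?_, ?_, ?_⟩⟩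
    · constructor
      · intro hxe
        have := congrArg Fin.val hxe
        simp at this
        omega
      · intro z h1 h2
        exfalso
        have hlt : (⟨(x : ℕ) - 1, hxn⟩ : Fin n) < x := by
          rw [Fin.lt_def]; simp; omega
        rw [min_eq_right hlt.le] at h1
        rw [max_eq_left hlt.le] at h2
        rw [Fin.lt_def] at h1 h2
        simp at h1
        omega
    · rw [Fin.le_def]
      have := hxv; rw [Fin.lt_def] at this
      simp; omega
    · rw [Fin.lt_def]; simp; omega
  have hnext : nextHop h v x = F.min' hFne := by
    rw [nextHop, if_neg (not_lt.mpr hxv.le), if_pos hxv, ← hF, ← Finset.coe_min' hFne,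
      WithTop.untopD_coe]
  obtain ⟨hedge, hvy, hyx⟩ := (Finset.mem_filter.mp (F.min'_mem hFne)).2
  set y := F.min' hFne with hy
  obtain ⟨hne_xy, hbet0⟩ := hedge
  have hbet : ∀ z : Fin n, y < z → z < x → h z < h x ∧ h z < h y := by
    intro z h1 h2
    have := hbet0 z (by rwa [min_eq_right hyx.le]) (by rwa [max_eq_left hyx.le])
    have := lt_min_iff.mp this
    exact ⟨this.1, this.2⟩
  rw [hnext]
  refine ⟨hyx, hvy, ?_⟩
  by_cases hyv' : y = v
  · exact Or.inl hyv'
  have hyv2 : v < y := lt_of_le_of_ne hvy (Ne.symm hyv')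
  by_cases hcase : ∀ z ∈ Finset.Ico v y, h z < h y
  · refine Or.inr (Or.inl ?_)
    rw [Pset, hminuv, hmaxuv]
    exact Finset.mem_filter.mpr ⟨Finset.mem_Ioo.mpr ⟨hyv2, lt_of_lt_of_le hyx hux⟩, hcase⟩
  push_neg at hcase
  obtain ⟨z0, hz0mem, hz0⟩ := hcase
  have hz0y : z0 < y := (Finset.mem_Ico.mp hz0mem).2
  have hyz0 : h y < h z0 :=
    lt_of_le_of_ne hz0 (fun e => (ne_of_lt hz0y) (hinj e).symm)
  have hxy_h : h x < h y := by
    by_contra hcon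
    have hyx' : h y < h x :=
      lt_of_le_of_ne (not_lt.mp hcon) (fun e => hne_xy (hinj e).symm)
    set S1 := (Finset.Ico v y).filter (fun z => h y < h z) with hS1
    have hS1ne : S1.Nonempty := ⟨z0, Finset.mem_filter.mpr ⟨hz0mem, hyz0⟩⟩
    set z1 := S1.max' hS1ne with hz1def
    obtain ⟨hz1Ico, hz1h⟩ := Finset.mem_filter.mp (S1.max'_mem hS1ne)
    have hz1y : z1 < y := (Finset.mem_Ico.mp hz1Ico).2
    have hz1v : v ≤ z1 := (Finset.mem_Ico.mp hz1Ico).1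
    have hxz1 : z1 < x := hz1y.trans hyx
    have hz1F : z1 ∈ F := by
      refine Finset.mem_filter.mpr ⟨Finset.mem_univ _, ⟨(ne_of_lt hxz1).symm, ?_⟩, hz1v, hxz1⟩
      intro w h1 h2
      rw [min_eq_right hxz1.le] at h1
      rw [max_eq_left hxz1.le] at h2
      rw [lt_min_iff]
      rcases lt_trichotomy w y with hwy | rfl | hwy
      · have hwS1 : w ∉ S1 := fun hw => absurd (S1.le_max' w hw) (not_le.mpr h1)
        have hwv : v ≤ w := hz1v.trans h1.le
        have : ¬ h y < h w := by
          intro hc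
          exact hwS1 (Finset.mem_filter.mpr ⟨Finset.mem_Ico.mpr ⟨hwv, hwy⟩, hc⟩)
        have hwy' : h w < h y :=
          lt_of_le_of_ne (not_lt.mp this) (fun e => (ne_of_lt hwy) (hinj e))
        exact ⟨hwy'.trans hyx', hwy'.trans hz1h⟩
      · exact ⟨hyx', hz1h⟩
      · obtain ⟨ha, hb⟩ := hbet w hwy h2
        exact ⟨ha, hb.trans hz1h⟩
    have := F.min'_le z1 hz1F
    rw [← hy] at this
    exact absurd this (not_le.mpr hz1y)
  refine Or.inr (Or.inr ?_)
  rw [Qset, hminuv, hmaxuv]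
  refine Finset.mem_filter.mpr ⟨Finset.mem_Ioo.mpr ⟨hyv2, lt_of_lt_of_le hyx hux⟩, ?_⟩
  intro z hz
  obtain ⟨hyz, hzu⟩ := Finset.mem_Ioc.mp hz
  rcases lt_trichotomy x z with h1 | rfl | h1
  · rcases hx with rfl | hxP | hxQ
    · exact absurd h1 (not_lt.mpr hzu)
    · exfalso
      have := (Finset.mem_filter.mp hxP).2 y
      rw [hminuv] at this
      exact absurd (this (Finset.mem_Ico.mpr ⟨hvy, hyx⟩)) (not_lt.mpr hxy_h.le)
    · have := (Finset.mem_filter.mp hxQ).2 z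
      rw [hmaxuv] at this
      exact (this (Finset.mem_Ioc.mpr ⟨h1, hzu⟩)).trans hxy_h
  · exact hxy_h
  · exact (hbet z hyz h1).2

end Step

section Count

variable {h : Fin n → ℝ} {u v : Fin n}

/-- Invariant set. -/
noncomputable def okSet (h : Fin n → ℝ) (u v : Fin n) : Finset (Fin n) :=
  {u, v} ∪ Pset h u v ∪ Qset h u v

lemma mem_okSet_of_inv {x : Fin n}
    (hx : x = u ∨ x ∈ Pset h u v ∨ x ∈ Qset h u v ∨ x = v) : x ∈ okSet h u v := by
  rw [okSet]
  rcases hx with rfl | h1 | h1 | rfl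
  · exact Finset.mem_union.mpr (Or.inl (Finset.mem_union.mpr (Or.inl (by simp))))
  · exact Finset.mem_union.mpr (Or.inl (Finset.mem_union.mpr (Or.inr h1)))
  · exact Finset.mem_union.mpr (Or.inr h1)
  · exact Finset.mem_union.mpr (Or.inl (Finset.mem_union.mpr (Or.inl (by simp))))

lemma routeAux_good_lt (hinj : Function.Injective h) (huv : u < v) :
    ∀ (fuel : ℕ) (x : Fin n), u ≤ x → x ≤ v →
      (x = u ∨ x ∈ Pset h u v ∨ x ∈ Qset h u v ∨ x = v) →
      (routeAux h v fuel x).Chain' (· < ·) ∧ ∀ y ∈ routeAux h v fuel x, y ∈ okSet h u v := by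
  intro fuel
  induction fuel with
  | zero =>
    intro x hux hxv hx
    refine ⟨List.isChain_singleton x, fun y hy => ?_⟩
    simp only [routeAux, List.mem_singleton] at hy
    subst hy
    exact mem_okSet_of_inv hx
  | succ m ih =>
    intro x hux hxv hx
    by_cases hxveq : x = v
    · have : routeAux h v (m + 1) x = [x] := by rw [routeAux, if_pos hxveq]
      rw [this]
      refine ⟨List.isChain_singleton x, fun y hy => ?_⟩
      rw [List.mem_singleton] at hy
      subst hy
      exact mem_okSet_of_inv (Or.inr (Or.inr (Or.inr hxveq)))
    · have hxv' : x < v := lt_of_le_of_ne hxv hxveq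
      have hx' : x = u ∨ x ∈ Pset h u v ∨ x ∈ Qset h u v := by
        rcases hx with h1 | h1 | h1 | h1
        · exact Or.inl h1
        · exact Or.inr (Or.inl h1)
        · exact Or.inr (Or.inr h1)
        · exact absurd h1 hxveq
      obtain ⟨hstep1, hstep2, hstep3⟩ := step_lt hinj huv hux hxv' hx'
      set y := nextHop h v x with hydef
      have hy' : y = u ∨ y ∈ Pset h u v ∨ y ∈ Qset h u v ∨ y = v := by
        rcases hstep3 with h1 | h1 | h1
        · exact Or.inr (Or.inr (Or.inr h1))
        · exact Or.inr (Or.inl h1)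
        · exact Or.inr (Or.inr (Or.inl h1))
      obtain ⟨ihc, ihm⟩ := ih y (hux.trans hstep1.le) hstep2 hy'
      have hrw : routeAux h v (m + 1) x = x :: routeAux h v m y := by
        rw [routeAux, if_neg hxveq]
      obtain ⟨t, ht⟩ := routeAux_cons h v m y
      rw [hrw, ht]
      rw [ht] at ihc ihm
      constructor
      · exact List.isChain_cons_cons.mpr ⟨hstep1, ihc⟩
      · intro z hz
        rcases List.mem_cons.mp hz with rfl | hz'
        · exact mem_okSet_of_inv (by tauto)
        · exact ihm z hz'

lemma routeAux_good_gt (hinj : Function.Injective h) (huv : v < u) :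
    ∀ (fuel : ℕ) (x : Fin n), x ≤ u → v ≤ x →
      (x = u ∨ x ∈ Pset h u v ∨ x ∈ Qset h u v ∨ x = v) →
      (routeAux h v fuel x).Chain' (· > ·) ∧ ∀ y ∈ routeAux h v fuel x, y ∈ okSet h u v := by
  intro fuel
  induction fuel with
  | zero =>
    intro x hux hxv hx
    refine ⟨List.isChain_singleton x, fun y hy => ?_⟩
    simp only [routeAux, List.mem_singleton] at hy
    subst hy
    exact mem_okSet_of_inv hx
  | succ m ih =>
    intro x hux hxv hx
    by_cases hxveq : x = v
    · have : routeAux h v (m + 1) x = [x] := by rw [routeAux, if_pos hxveq]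
      rw [this]
      refine ⟨List.isChain_singleton x, fun y hy => ?_⟩
      rw [List.mem_singleton] at hy
      subst hy
      exact mem_okSet_of_inv (Or.inr (Or.inr (Or.inr hxveq)))
    · have hxv' : v < x := lt_of_le_of_ne hxv (Ne.symm hxveq)
      have hx' : x = u ∨ x ∈ Pset h u v ∨ x ∈ Qset h u v := by
        rcases hx with h1 | h1 | h1 | h1
        · exact Or.inl h1
        · exact Or.inr (Or.inl h1)
        · exact Or.inr (Or.inr h1)
        · exact absurd h1 hxveq
      obtain ⟨hstep1, hstep2, hstep3⟩ := step_gt hinj huv hux hxv' hx'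
      set y := nextHop h v x with hydef
      have hy' : y = u ∨ y ∈ Pset h u v ∨ y ∈ Qset h u v ∨ y = v := by
        rcases hstep3 with h1 | h1 | h1
        · exact Or.inr (Or.inr (Or.inr h1))
        · exact Or.inr (Or.inl h1)
        · exact Or.inr (Or.inr (Or.inl h1))
      obtain ⟨ihc, ihm⟩ := ih y (hstep1.le.trans hux) hstep2 hy'
      have hrw : routeAux h v (m + 1) x = x :: routeAux h v m y := by
        rw [routeAux, if_neg hxveq]
      obtain ⟨t, ht⟩ := routeAux_cons h v m y
      rw [hrw, ht]
      rw [ht] at ihc ihm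
      constructor
      · exact List.isChain_cons_cons.mpr ⟨hstep1, ihc⟩
      · intro z hz
        rcases List.mem_cons.mp hz with rfl | hz'
        · exact mem_okSet_of_inv (by tauto)
        · exact ihm z hz'

/-- The key deterministic bound. -/
lemma dist_le_card (hinj : Function.Injective h) (u v : Fin n) :
    dist h u v ≤ 1 + (Pset h u v).card + (Qset h u v).card := by
  have key : ∀ l : List (Fin n), l.Nodup → (∀ y ∈ l, y ∈ okSet h u v) →
      l.length ≤ 2 + (Pset h u v).card + (Qset h u v).card := by
    intro l hnd hmem
    have h1 : l.length = l.toFinset.card := (List.toFinset_card_of_nodup hnd).symm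
    have h2 : l.toFinset ⊆ okSet h u v := fun y hy => hmem y (List.mem_toFinset.mp hy)
    have h3 : (okSet h u v).card ≤ 2 + (Pset h u v).card + (Qset h u v).card := by
      refine le_trans (Finset.card_union_le _ _) ?_
      have : (({u, v} : Finset (Fin n)) ∪ Pset h u v).card ≤ 2 + (Pset h u v).card := by
        refine le_trans (Finset.card_union_le _ _) ?_
        have : ({u, v} : Finset (Fin n)).card ≤ 2 := Finset.card_le_two
        omega
      omega
    calc l.length = l.toFinset.card := h1
      _ ≤ (okSet h u v).card := Finset.card_le_card h2
      _ ≤ 2 + (Pset h u v).card + (Qset h u v).card := h3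
  rcases lt_trichotomy u v with huv | rfl | huv
  · obtain ⟨hc, hm⟩ := routeAux_good_lt hinj huv n u le_rfl huv.le (Or.inl rfl)
    have hnd : (routeAux h v n u).Nodup := by
      have hp := (List.isChain_iff_pairwise).mp hc
      exact hp.imp ne_of_lt
    have := key _ hnd hm
    rw [dist, route]
    omega
  · rw [dist, route]
    have hn : 0 < n := u.pos
    obtain ⟨m, rfl⟩ := Nat.exists_eq_succ_of_ne_zero hn.ne'
    have : routeAux h u (m + 1) u = [u] := by rw [routeAux, if_pos rfl]
    rw [this]
    simp
  · obtain ⟨hc, hm⟩ := routeAux_good_gt hinj huv n u le_rfl huv.le (Or.inl rfl)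
    have hnd : (routeAux h v n u).Nodup := by
      have hp := (List.isChain_iff_pairwise).mp hc
      exact hp.imp ne_of_gt
    have := key _ hnd hm
    rw [dist, route]
    omega

end Count

/-! ### Probabilistic lemmas -/

section Prob

/-- The uniform measure on `(0,1)`. -/
noncomputable def nu : Measure ℝ := volume.restrict (Set.Ioo (0:ℝ) 1)

instance : IsProbabilityMeasure nu :=
  ⟨by rw [nu, Measure.restrict_apply_univ, Real.volume_Ioo]; norm_num⟩

variable {Ω : Type} [MeasurableSpace Ω] {μ : Measure Ω} [IsProbabilityMeasure μ]
variable {U : Fin n → Ω → ℝ}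

lemma map_J (hUmeas : ∀ i, Measurable (U i))
    (hindep : iIndepFun U μ)
    (hlaw : ∀ i, Measure.map (U i) μ = nu) :
    Measure.map (fun ω (i : Fin n) => U i ω) μ = Measure.pi (fun _ : Fin n => nu) := by
  refine (Measure.pi_eq fun s hs => ?_).symm
  have hJ : Measurable (fun ω (i : Fin n) => U i ω) :=
    measurable_pi_lambda _ (fun i => hUmeas i)
  rw [Measure.map_apply hJ (MeasurableSet.univ_pi hs)]
  have hpre : (fun ω (i : Fin n) => U i ω) ⁻¹' Set.pi Set.univ s
      = ⋂ i ∈ Finset.univ, U i ⁻¹' s i := by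
    ext ω; simp [Set.mem_pi]
  rw [hpre, hindep.measure_inter_preimage_eq_mul Finset.univ (fun i _ => hs i)]
  refine Finset.prod_congr rfl fun i _ => ?_
  rw [← Measure.map_apply (hUmeas i) (hs i), hlaw i]

lemma pi_map_comp (σ : Equiv.Perm (Fin n)) :
    (Measure.pi (fun _ : Fin n => nu)).map (fun g : Fin n → ℝ => g ∘ σ)
      = Measure.pi (fun _ : Fin n => nu) := by
  refine (Measure.pi_eq fun s hs => ?_).symm
  have hC : Measurable (fun g : Fin n → ℝ => g ∘ σ) :=
    measurable_pi_lambda _ (fun i => measurable_pi_apply (σ i))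
  rw [Measure.map_apply hC (MeasurableSet.univ_pi hs)]
  have hpre : (fun g : Fin n → ℝ => g ∘ σ) ⁻¹' Set.pi Set.univ s
      = Set.pi Set.univ (fun j => s (σ.symm j)) := by
    ext g
    simp only [Set.mem_preimage, Set.mem_pi, Set.mem_univ, forall_true_left, Function.comp]
    constructor
    · intro H j
      have := H (σ.symm j)
      rwa [Equiv.apply_symm_apply] at this
    · intro H i
      have := H (σ i)
      rwa [Equiv.symm_apply_apply] at this
  rw [hpre, Measure.pi_pi]
  exact Equiv.prod_comp σ.symm (fun i => nu (s i))

lemma pi_records_bound (A : Finset (Fin n)) (x : Fin n) (hx : x ∉ A) :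
    Measure.pi (fun _ : Fin n => nu) {g : Fin n → ℝ | ∀ z ∈ A, g z < g x}
      ≤ ((A.card : ℝ≥0∞) + 1)⁻¹ := by
  set π := Measure.pi (fun _ : Fin n => nu) with hπ
  set T := insert x A with hT
  set B : Fin n → Set (Fin n → ℝ) := fun y => {g | ∀ z ∈ T.erase y, g z < g y} with hB
  have hBmeas : ∀ y, MeasurableSet (B y) := by
    intro y
    have : B y = ⋂ z ∈ (T.erase y : Finset (Fin n)), {g : Fin n → ℝ | g z < g y} := by
      ext g; simp [hB]
    rw [this]
    exact MeasurableSet.biInter (Set.to_countable _)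
      (fun z _ => measurableSet_lt (measurable_pi_apply z) (measurable_pi_apply y))
  have hequal : ∀ y ∈ T, π (B y) = π (B x) := by
    intro y hyT
    set σ := Equiv.swap x y with hσ
    have hCσ : Measurable (fun g : Fin n → ℝ => g ∘ σ) :=
      measurable_pi_lambda _ (fun i => measurable_pi_apply (σ i))
    have hTmap : ∀ w ∈ T, σ w ∈ T := by
      intro w hw
      rcases eq_or_ne w x with rfl | hwx
      · rw [hσ]; rw [Equiv.swap_apply_left]; exact hyT
      rcases eq_or_ne w y with rfl | hwy
      · rw [hσ]; rw [Equiv.swap_apply_right]; exact Finset.mem_insert_self x A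
      · rw [hσ, Equiv.swap_apply_of_ne_of_ne hwx hwy]; exact hw
    have hxT : x ∈ T := Finset.mem_insert_self x A
    have hpre : (fun g : Fin n → ℝ => g ∘ σ) ⁻¹' (B y) = B x := by
      ext g
      simp only [hB, Set.mem_preimage, Set.mem_setOf_eq, Function.comp]
      constructor
      · intro H w hw
        obtain ⟨hwx, hwT⟩ := Finset.mem_erase.mp hw
        have hz : σ w ∈ T.erase y := by
          refine Finset.mem_erase.mpr ⟨?_, hTmap w hwT⟩
          intro he
          apply hwx
          have := congrArg σ he
          rwa [Equiv.swap_apply_self, Equiv.swap_apply_right] at this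
        have := H (σ w) hz
        rwa [Equiv.swap_apply_self, Equiv.swap_apply_right] at this
      · intro H z hz
        obtain ⟨hzy, hzT⟩ := Finset.mem_erase.mp hz
        have hz' : σ z ∈ T.erase x := by
          refine Finset.mem_erase.mpr ⟨?_, hTmap z hzT⟩
          intro he
          apply hzy
          have := congrArg σ he
          rwa [Equiv.swap_apply_self, Equiv.swap_apply_left] at this
        have := H (σ z) hz'
        rw [show σ y = x from Equiv.swap_apply_right x y]
        exact this
    have hmp := pi_map_comp σ
    calc π (B y)
        = ((Measure.pi (fun _ : Fin n => nu)).map (fun g : Fin n → ℝ => g ∘ σ)) (B y) := by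
          rw [hmp, hπ]
      _ = π ((fun g : Fin n → ℝ => g ∘ σ) ⁻¹' (B y)) := by
          rw [Measure.map_apply hCσ (hBmeas y), hπ]
      _ = π (B x) := by rw [hpre]
  have hdisj : Set.PairwiseDisjoint (↑T) B := by
    intro y hy y' hy' hne
    refine Set.disjoint_left.mpr fun g hg hg' => ?_
    have h1 : g y' < g y := hg y' (Finset.mem_erase.mpr ⟨hne.symm, hy'⟩)
    have h2 : g y < g y' := hg' y (Finset.mem_erase.mpr ⟨hne, hy⟩)
    exact lt_asymm h1 h2
  have hsum : ∑ y ∈ T, π (B y) = π (⋃ y ∈ T, B y) :=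
    (measure_biUnion_finset hdisj (fun y _ => hBmeas y)).symm
  have hle1 : ∑ y ∈ T, π (B y) ≤ 1 := by
    rw [hsum]; exact prob_le_one
  have hcards : (T.card : ℝ≥0∞) * π (B x) ≤ 1 := by
    calc (T.card : ℝ≥0∞) * π (B x) = ∑ _y ∈ T, π (B x) := by
          rw [Finset.sum_const, nsmul_eq_mul]
      _ = ∑ y ∈ T, π (B y) := Finset.sum_congr rfl (fun y hy => (hequal y hy).symm)
      _ ≤ 1 := hle1
  have hBx : B x = {g : Fin n → ℝ | ∀ z ∈ A, g z < g x} := by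
    rw [hB]
    simp only [hT, Finset.erase_insert hx]
  have hTcard : T.card = A.card + 1 := Finset.card_insert_of_notMem hx
  rw [← hBx]
  rw [ENNReal.le_inv_iff_mul_le, mul_comm]
  have hc2 : ((A.card : ℝ≥0∞) + 1) = (T.card : ℝ≥0∞) := by
    rw [hTcard]; push_cast; ring
  rw [hc2]
  exact hcards

lemma prob_records_bound (hUmeas : ∀ i, Measurable (U i))
    (hindep : iIndepFun U μ)
    (hlaw : ∀ i, Measure.map (U i) μ = nu)
    (A : Finset (Fin n)) (x : Fin n) (hx : x ∉ A) :
    (μ {ω | ∀ z ∈ A, U z ω < U x ω}).toReal ≤ ((A.card : ℝ) + 1)⁻¹ := by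
  have hJ : Measurable (fun ω (i : Fin n) => U i ω) :=
    measurable_pi_lambda _ (fun i => hUmeas i)
  have hBmeas : MeasurableSet {g : Fin n → ℝ | ∀ z ∈ A, g z < g x} := by
    have : {g : Fin n → ℝ | ∀ z ∈ A, g z < g x}
        = ⋂ z ∈ (A : Finset (Fin n)), {g : Fin n → ℝ | g z < g x} := by
      ext g; simp
    rw [this]
    exact MeasurableSet.biInter (Set.to_countable _)
      (fun z _ => measurableSet_lt (measurable_pi_apply z) (measurable_pi_apply x))
  have hset : {ω | ∀ z ∈ A, U z ω < U x ω}
      = (fun ω (i : Fin n) => U i ω) ⁻¹' {g : Fin n → ℝ | ∀ z ∈ A, g z < g x} := by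
    ext ω; simp
  have hmain : μ {ω | ∀ z ∈ A, U z ω < U x ω} ≤ ((A.card : ℝ≥0∞) + 1)⁻¹ := by
    rw [hset, ← Measure.map_apply hJ hBmeas, map_J hUmeas hindep hlaw]
    exact pi_records_bound A x hx
  have htop : ((A.card : ℝ≥0∞) + 1)⁻¹ ≠ ⊤ := by
    simp
  calc (μ {ω | ∀ z ∈ A, U z ω < U x ω}).toReal
      ≤ (((A.card : ℝ≥0∞) + 1)⁻¹).toReal := ENNReal.toReal_mono htop hmain
    _ = ((A.card : ℝ) + 1)⁻¹ := by
        rw [ENNReal.toReal_inv, ENNReal.toReal_add (ENNReal.natCast_ne_top _) ENNReal.one_ne_top]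
        simp
  
lemma measure_shift_eq_zero (hUmeas : ∀ i, Measurable (U i))
    (hindep : iIndepFun U μ)
    (hlaw : ∀ i, Measure.map (U i) μ = nu)
    (i j : Fin n) (hij : i ≠ j) (r : ℝ) :
    μ {ω | U i ω = U j ω + r} = 0 := by
  have hpair := (ProbabilityTheory.indepFun_iff_map_prod_eq_prod_map_map
    (hUmeas i).aemeasurable (hUmeas j).aemeasurable).mp (hindep.indepFun hij)
  rw [hlaw i, hlaw j] at hpair
  set s : Set (ℝ × ℝ) := {p | p.1 = p.2 + r} with hs
  have hsmeas : MeasurableSet s :=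
    measurableSet_eq_fun measurable_fst (measurable_snd.add_const r)
  have h1 : {ω | U i ω = U j ω + r} = (fun ω => (U i ω, U j ω)) ⁻¹' s := by
    ext ω; simp [hs]
  rw [h1, ← Measure.map_apply ((hUmeas i).prodMk (hUmeas j)) hsmeas, hpair]
  rw [Measure.prod_apply hsmeas]
  have h2 : ∀ x : ℝ, nu (Prod.mk x ⁻¹' s) = 0 := by
    intro x
    have : Prod.mk x ⁻¹' s = {x - r} := by
      ext y; simp [hs]; constructor
      · intro he; linarith
      · intro he; linarith
    rw [this]
    refine le_antisymm ?_ (zero_le)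
    calc nu {x - r} ≤ volume {x - r} := Measure.restrict_le_self _
      _ = 0 := Real.volume_singleton
  simp only [h2]
  simp

lemma U_range_ae (hUmeas : ∀ i, Measurable (U i))
    (hlaw : ∀ i, Measure.map (U i) μ = nu) (i : Fin n) :
    ∀ᵐ ω ∂μ, U i ω ∈ Set.Ioo (0:ℝ) 1 := by
  have h1 : μ (U i ⁻¹' Set.Ioo (0:ℝ) 1) = 1 := by
    rw [← Measure.map_apply (hUmeas i) measurableSet_Ioo, hlaw i]
    rw [nu, Measure.restrict_apply measurableSet_Ioo, Set.inter_self, Real.volume_Ioo]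
    norm_num
  have h2 : μ (U i ⁻¹' Set.Ioo (0:ℝ) 1)ᶜ = 0 := by
    rw [measure_compl ((hUmeas i) measurableSet_Ioo) (measure_ne_top μ _), h1]
    simp
  filter_upwards [MeasureTheory.measure_eq_zero_iff_ae_notMem.mp h2] with ω hω
  simpa using not_not.mp (by simpa using hω)

end Prob

/-! ### Harmonic-type bounds -/

section Harmonic

lemma harmonic_cast (m : ℕ) :
    ((harmonic m : ℚ) : ℝ) = ∑ k ∈ Finset.range m, ((k : ℝ) + 1)⁻¹ := by
  rw [harmonic]
  push_cast
  rfl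

lemma log_nat_mono {m k : ℕ} (h : m ≤ k) : Real.log m ≤ Real.log k := by
  rcases Nat.eq_zero_or_pos m with rfl | hm
  · rcases Nat.eq_zero_or_pos k with rfl | hk
    · exact le_refl _
    · simp only [Nat.cast_zero, Real.log_zero]
      exact Real.log_natCast_nonneg k
  · exact Real.log_le_log (by exact_mod_cast hm) (by exact_mod_cast h)

lemma rank_sum_le {β : Type*} [LinearOrder β] (L : Finset β) :
    ∑ x ∈ L, (((L.filter (fun z => z < x)).card : ℝ) + 1)⁻¹ ≤ 1 + Real.log L.card := by
  classical
  set r : β → ℕ := fun x => (L.filter (fun z => z < x)).card with hr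
  have hrlt : ∀ x ∈ L, r x < L.card := by
    intro x hx
    have hsub : L.filter (fun z => z < x) ⊆ L.erase x := by
      intro z hz
      obtain ⟨hzL, hzx⟩ := Finset.mem_filter.mp hz
      exact Finset.mem_erase.mpr ⟨ne_of_lt hzx, hzL⟩
    calc r x ≤ (L.erase x).card := Finset.card_le_card hsub
      _ < L.card := Finset.card_erase_lt_of_mem hx
  have hmono : ∀ x ∈ L, ∀ y ∈ L, x < y → r x < r y := by
    intro x hx y hy hxy
    refine Finset.card_lt_card ⟨fun z hz => ?_, fun hcon => ?_⟩
    · obtain ⟨hzL, hzx⟩ := Finset.mem_filter.mp hz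
      exact Finset.mem_filter.mpr ⟨hzL, hzx.trans hxy⟩
    · have := hcon (Finset.mem_filter.mpr ⟨hx, hxy⟩)
      exact absurd (Finset.mem_filter.mp this).2 (lt_irrefl x)
  have hinj : Set.InjOn r L := by
    intro x hx y hy hxy
    by_contra hne
    rcases lt_or_gt_of_ne hne with h1 | h1
    · exact absurd hxy (ne_of_lt (hmono x hx y hy h1))
    · exact absurd hxy.symm (ne_of_lt (hmono y hy x hx h1))
  calc ∑ x ∈ L, ((r x : ℝ) + 1)⁻¹
      = ∑ k ∈ L.image r, ((k : ℝ) + 1)⁻¹ := (Finset.sum_image (f := fun k : ℕ => ((k : ℝ) + 1)⁻¹) (fun x hx y hy => hinj hx hy)).symm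
    _ ≤ ∑ k ∈ Finset.range L.card, ((k : ℝ) + 1)⁻¹ := by
        refine Finset.sum_le_sum_of_subset_of_nonneg ?_ (fun k _ _ => by positivity)
        intro k hk
        obtain ⟨x, hx, rfl⟩ := Finset.mem_image.mp hk
        exact Finset.mem_range.mpr (hrlt x hx)
    _ = ((harmonic L.card : ℚ) : ℝ) := (harmonic_cast _).symm
    _ ≤ 1 + Real.log L.card := by exact_mod_cast harmonic_le_one_add_log L.card

lemma rank_sum_le_gt {β : Type*} [LinearOrder β] (L : Finset β) :
    ∑ x ∈ L, (((L.filter (fun z => x < z)).card : ℝ) + 1)⁻¹ ≤ 1 + Real.log L.card := by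
  classical
  set r : β → ℕ := fun x => (L.filter (fun z => x < z)).card with hr
  have hrlt : ∀ x ∈ L, r x < L.card := by
    intro x hx
    have hsub : L.filter (fun z => x < z) ⊆ L.erase x := by
      intro z hz
      obtain ⟨hzL, hzx⟩ := Finset.mem_filter.mp hz
      exact Finset.mem_erase.mpr ⟨(ne_of_lt hzx).symm, hzL⟩
    calc r x ≤ (L.erase x).card := Finset.card_le_card hsub
      _ < L.card := Finset.card_erase_lt_of_mem hx
  have hmono : ∀ x ∈ L, ∀ y ∈ L, x < y → r y < r x := by
    intro x hx y hy hxy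
    refine Finset.card_lt_card ⟨fun z hz => ?_, fun hcon => ?_⟩
    · obtain ⟨hzL, hzx⟩ := Finset.mem_filter.mp hz
      exact Finset.mem_filter.mpr ⟨hzL, hxy.trans hzx⟩
    · have := hcon (Finset.mem_filter.mpr ⟨hy, hxy⟩)
      exact absurd (Finset.mem_filter.mp this).2 (lt_irrefl y)
  have hinj : Set.InjOn r L := by
    intro x hx y hy hxy
    by_contra hne
    rcases lt_or_gt_of_ne hne with h1 | h1
    · exact absurd hxy.symm (ne_of_lt (hmono x hx y hy h1))
    · exact absurd hxy (ne_of_lt (hmono y hy x hx h1))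
  calc ∑ x ∈ L, ((r x : ℝ) + 1)⁻¹
      = ∑ k ∈ L.image r, ((k : ℝ) + 1)⁻¹ := (Finset.sum_image (f := fun k : ℕ => ((k : ℝ) + 1)⁻¹) (fun x hx y hy => hinj hx hy)).symm
    _ ≤ ∑ k ∈ Finset.range L.card, ((k : ℝ) + 1)⁻¹ := by
        refine Finset.sum_le_sum_of_subset_of_nonneg ?_ (fun k _ _ => by positivity)
        intro k hk
        obtain ⟨x, hx, rfl⟩ := Finset.mem_image.mp hk
        exact Finset.mem_range.mpr (hrlt x hx)
    _ = ((harmonic L.card : ℚ) : ℝ) := (harmonic_cast _).symm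
    _ ≤ 1 + Real.log L.card := by exact_mod_cast harmonic_le_one_add_log L.card

end Harmonic

/-! ### Per-pair expectation bounds -/

section PerPair

variable {Ω : Type} [MeasurableSpace Ω] {μ : Measure Ω} [IsProbabilityMeasure μ]
variable {U : Fin n → Ω → ℝ}

/-- Event that `x` beats everybody in `[min u v, x)`. -/
def PE (U : Fin n → Ω → ℝ) (pred : Fin n → ℕ) (u v x : Fin n) : Set Ω :=
  {ω | ∀ z ∈ Finset.Ico (min u v) x, (pred z : ℝ) + U z ω < (pred x : ℝ) + U x ω}

/-- Event that `x` beats everybody in `(x, max u v]`. -/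
def QE (U : Fin n → Ω → ℝ) (pred : Fin n → ℕ) (u v x : Fin n) : Set Ω :=
  {ω | ∀ z ∈ Finset.Ioc x (max u v), (pred z : ℝ) + U z ω < (pred x : ℝ) + U x ω}

lemma PE_meas (hUmeas : ∀ i, Measurable (U i)) (pred : Fin n → ℕ) (u v x : Fin n) :
    MeasurableSet (PE U pred u v x) := by
  have : PE U pred u v x = ⋂ z ∈ Finset.Ico (min u v) x,
      {ω | (pred z : ℝ) + U z ω < (pred x : ℝ) + U x ω} := by
    ext ω; simp [PE]
  rw [this]
  exact MeasurableSet.biInter (Set.to_countable _)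
    (fun z _ => measurableSet_lt (measurable_const.add (hUmeas z))
      (measurable_const.add (hUmeas x)))

lemma QE_meas (hUmeas : ∀ i, Measurable (U i)) (pred : Fin n → ℕ) (u v x : Fin n) :
    MeasurableSet (QE U pred u v x) := by
  have : QE U pred u v x = ⋂ z ∈ Finset.Ioc x (max u v),
      {ω | (pred z : ℝ) + U z ω < (pred x : ℝ) + U x ω} := by
    ext ω; simp [QE]
  rw [this]
  exact MeasurableSet.biInter (Set.to_countable _)
    (fun z _ => measurableSet_lt (measurable_const.add (hUmeas z))
      (measurable_const.add (hUmeas x)))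

lemma PE_toReal_le (hUmeas : ∀ i, Measurable (U i))
    (hindep : iIndepFun U μ)
    (hlaw : ∀ i, Measure.map (U i) μ = nu) (pred : Fin n → ℕ) (u v x : Fin n) :
    (μ (PE U pred u v x)).toReal ≤
      ((((Finset.Ico (min u v) x).filter (fun z => pred z = pred x)).card : ℝ) + 1)⁻¹ := by
  set A := (Finset.Ico (min u v) x).filter (fun z => pred z = pred x) with hA
  have hxA : x ∉ A := by
    intro hx
    exact absurd (Finset.mem_Ico.mp (Finset.mem_filter.mp hx).1).2 (lt_irrefl x)
  have hsub : PE U pred u v x ⊆ {ω | ∀ z ∈ A, U z ω < U x ω} := by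
    intro ω hω z hz
    obtain ⟨hz1, hz2⟩ := Finset.mem_filter.mp hz
    have := hω z hz1
    have hcast : (pred z : ℝ) = (pred x : ℝ) := by rw [hz2]
    linarith
  calc (μ (PE U pred u v x)).toReal
      ≤ (μ {ω | ∀ z ∈ A, U z ω < U x ω}).toReal :=
        ENNReal.toReal_mono (measure_ne_top μ _) (measure_mono hsub)
    _ ≤ ((A.card : ℝ) + 1)⁻¹ := prob_records_bound hUmeas hindep hlaw A x hxA

lemma QE_toReal_le (hUmeas : ∀ i, Measurable (U i))
    (hindep : iIndepFun U μ)
    (hlaw : ∀ i, Measure.map (U i) μ = nu) (pred : Fin n → ℕ) (u v x : Fin n) :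
    (μ (QE U pred u v x)).toReal ≤
      ((((Finset.Ioc x (max u v)).filter (fun z => pred z = pred x)).card : ℝ) + 1)⁻¹ := by
  set A := (Finset.Ioc x (max u v)).filter (fun z => pred z = pred x) with hA
  have hxA : x ∉ A := by
    intro hx
    exact absurd (Finset.mem_Ioc.mp (Finset.mem_filter.mp hx).1).1 (lt_irrefl x)
  have hsub : QE U pred u v x ⊆ {ω | ∀ z ∈ A, U z ω < U x ω} := by
    intro ω hω z hz
    obtain ⟨hz1, hz2⟩ := Finset.mem_filter.mp hz
    have := hω z hz1
    have hcast : (pred z : ℝ) = (pred x : ℝ) := by rw [hz2]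
    linarith
  calc (μ (QE U pred u v x)).toReal
      ≤ (μ {ω | ∀ z ∈ A, U z ω < U x ω}).toReal :=
        ENNReal.toReal_mono (measure_ne_top μ _) (measure_mono hsub)
    _ ≤ ((A.card : ℝ) + 1)⁻¹ := prob_records_bound hUmeas hindep hlaw A x hxA

lemma sum_PE_class (hUmeas : ∀ i, Measurable (U i))
    (hindep : iIndepFun U μ)
    (hlaw : ∀ i, Measure.map (U i) μ = nu) (pred : Fin n → ℕ) (u v : Fin n) (k : ℕ) :
    ∑ x ∈ (Finset.Ioo (min u v) (max u v)).filter (fun z => pred z = k),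
        (μ (PE U pred u v x)).toReal
      ≤ 1 + Real.log (((Finset.Ioo (min u v) (max u v)).filter (fun z => pred z = k)).card) := by
  set L := (Finset.Ioo (min u v) (max u v)).filter (fun z => pred z = k) with hL
  refine le_trans (Finset.sum_le_sum ?_) (rank_sum_le L)
  intro x hxL
  refine le_trans (PE_toReal_le hUmeas hindep hlaw pred u v x) ?_
  have hsub : L.filter (fun z => z < x) ⊆
      (Finset.Ico (min u v) x).filter (fun z => pred z = pred x) := by
    intro z hz
    obtain ⟨hzL, hzx⟩ := Finset.mem_filter.mp hz
    obtain ⟨hzIoo, hzk⟩ := Finset.mem_filter.mp hzL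
    obtain ⟨hxIoo, hxk⟩ := Finset.mem_filter.mp hxL
    refine Finset.mem_filter.mpr ⟨?_, by rw [hzk, hxk]⟩
    exact Finset.mem_Ico.mpr ⟨(Finset.mem_Ioo.mp hzIoo).1.le, hzx⟩
  have hcard : ((L.filter (fun z => z < x)).card : ℝ) + 1
      ≤ (((Finset.Ico (min u v) x).filter (fun z => pred z = pred x)).card : ℝ) + 1 := by
    have := Finset.card_le_card hsub
    exact_mod_cast Nat.add_le_add_right this 1
  exact inv_anti₀ (by positivity) hcard

lemma sum_QE_class (hUmeas : ∀ i, Measurable (U i))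
    (hindep : iIndepFun U μ)
    (hlaw : ∀ i, Measure.map (U i) μ = nu) (pred : Fin n → ℕ) (u v : Fin n) (k : ℕ) :
    ∑ x ∈ (Finset.Ioo (min u v) (max u v)).filter (fun z => pred z = k),
        (μ (QE U pred u v x)).toReal
      ≤ 1 + Real.log (((Finset.Ioo (min u v) (max u v)).filter (fun z => pred z = k)).card) := by
  set L := (Finset.Ioo (min u v) (max u v)).filter (fun z => pred z = k) with hL
  refine le_trans (Finset.sum_le_sum ?_) (rank_sum_le_gt L)
  intro x hxL
  refine le_trans (QE_toReal_le hUmeas hindep hlaw pred u v x) ?_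
  have hsub : L.filter (fun z => x < z) ⊆
      (Finset.Ioc x (max u v)).filter (fun z => pred z = pred x) := by
    intro z hz
    obtain ⟨hzL, hzx⟩ := Finset.mem_filter.mp hz
    obtain ⟨hzIoo, hzk⟩ := Finset.mem_filter.mp hzL
    obtain ⟨hxIoo, hxk⟩ := Finset.mem_filter.mp hxL
    refine Finset.mem_filter.mpr ⟨?_, by rw [hzk, hxk]⟩
    exact Finset.mem_Ioc.mpr ⟨hzx, (Finset.mem_Ioo.mp hzIoo).2.le⟩
  have hcard : ((L.filter (fun z => x < z)).card : ℝ) + 1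
      ≤ (((Finset.Ioc x (max u v)).filter (fun z => pred z = pred x)).card : ℝ) + 1 := by
    have := Finset.card_le_card hsub
    exact_mod_cast Nat.add_le_add_right this 1
  exact inv_anti₀ (by positivity) hcard


lemma sum_split (pred : Fin n → ℕ) (hpred : ∀ i, pred i = 1 ∨ pred i = 2)
    (s : Finset (Fin n)) (f : Fin n → ℝ) :
    ∑ x ∈ s, f x = ∑ x ∈ s.filter (fun z => pred z = 1), f x
      + ∑ x ∈ s.filter (fun z => pred z = 2), f x := by
  rw [← Finset.sum_filter_add_sum_filter_not s (fun z => pred z = 1)]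
  congr 2
  refine Finset.filter_congr ?_
  intro z hz
  rcases hpred z with h | h <;> simp [h]

lemma K_bound_general (hUmeas : ∀ i, Measurable (U i))
    (hindep : iIndepFun U μ)
    (hlaw : ∀ i, Measure.map (U i) μ = nu) (pred : Fin n → ℕ)
    (hpred : ∀ i, pred i = 1 ∨ pred i = 2) (u v : Fin n) :
    1 + ∑ x ∈ Finset.Ioo (min u v) (max u v),
        ((μ (PE U pred u v x)).toReal + (μ (QE U pred u v x)).toReal)
      ≤ 5 + 4 * Real.log n := by
  have hlogle : ∀ k : ℕ,
      Real.log (((Finset.Ioo (min u v) (max u v)).filter (fun z => pred z = k)).card)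
        ≤ Real.log n := by
    intro k
    refine log_nat_mono ?_
    simpa using Finset.card_le_univ ((Finset.Ioo (min u v) (max u v)).filter
      (fun z => pred z = k))
  have hP : ∑ x ∈ Finset.Ioo (min u v) (max u v), (μ (PE U pred u v x)).toReal
      ≤ 2 * (1 + Real.log n) := by
    rw [sum_split pred hpred]
    have e1 := sum_PE_class hUmeas hindep hlaw pred u v 1
    have e2 := sum_PE_class hUmeas hindep hlaw pred u v 2
    linarith [hlogle 1, hlogle 2]
  have hQ : ∑ x ∈ Finset.Ioo (min u v) (max u v), (μ (QE U pred u v x)).toReal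
      ≤ 2 * (1 + Real.log n) := by
    rw [sum_split pred hpred]
    have e1 := sum_QE_class hUmeas hindep hlaw pred u v 1
    have e2 := sum_QE_class hUmeas hindep hlaw pred u v 2
    linarith [hlogle 1, hlogle 2]
  rw [Finset.sum_add_distrib]
  linarith [Real.log_natCast_nonneg n]

lemma K_bound_S (hUmeas : ∀ i, Measurable (U i))
    (hindep : iIndepFun U μ)
    (hlaw : ∀ i, Measure.map (U i) μ = nu) (pred : Fin n → ℕ)
    (hpred : ∀ i, pred i = 1 ∨ pred i = 2) (u v : Fin n)
    (hu2 : pred (min u v) = 2) (hv2 : pred (max u v) = 2) :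
    1 + ∑ x ∈ Finset.Ioo (min u v) (max u v),
        ((μ (PE U pred u v x)).toReal + (μ (QE U pred u v x)).toReal)
      ≤ 3 + 2 * Real.log ((Finset.univ.filter (fun i => pred i = 2)).card) := by
  set M := (Finset.univ.filter (fun i => pred i = 2)).card with hM
  have hlogle : Real.log (((Finset.Ioo (min u v) (max u v)).filter
      (fun z => pred z = 2)).card) ≤ Real.log M := by
    refine log_nat_mono (Finset.card_le_card ?_)
    intro z hz
    exact Finset.mem_filter.mpr ⟨Finset.mem_univ _, (Finset.mem_filter.mp hz).2⟩
  have hPzero : ∀ x ∈ (Finset.Ioo (min u v) (max u v)).filter (fun z => pred z = 1),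
      (μ (PE U pred u v x)).toReal = 0 := by
    intro x hx
    obtain ⟨hxIoo, hx1⟩ := Finset.mem_filter.mp hx
    have h0 : μ (PE U pred u v x) = 0 := by
      rw [MeasureTheory.measure_eq_zero_iff_ae_notMem]
      filter_upwards [U_range_ae hUmeas hlaw (min u v), U_range_ae hUmeas hlaw x]
        with ω h1 h2 hPE
      have hkey := hPE (min u v)
        (Finset.mem_Ico.mpr ⟨le_rfl, (Finset.mem_Ioo.mp hxIoo).1⟩)
      rw [hu2, hx1] at hkey
      push_cast at hkey
      obtain ⟨h1a, _⟩ := h1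
      obtain ⟨_, h2b⟩ := h2
      linarith
    rw [h0]
    simp
  have hQzero : ∀ x ∈ (Finset.Ioo (min u v) (max u v)).filter (fun z => pred z = 1),
      (μ (QE U pred u v x)).toReal = 0 := by
    intro x hx
    obtain ⟨hxIoo, hx1⟩ := Finset.mem_filter.mp hx
    have h0 : μ (QE U pred u v x) = 0 := by
      rw [MeasureTheory.measure_eq_zero_iff_ae_notMem]
      filter_upwards [U_range_ae hUmeas hlaw (max u v), U_range_ae hUmeas hlaw x]
        with ω h1 h2 hQE
      have hkey := hQE (max u v)
        (Finset.mem_Ioc.mpr ⟨(Finset.mem_Ioo.mp hxIoo).2, le_rfl⟩)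
      rw [hv2, hx1] at hkey
      push_cast at hkey
      obtain ⟨h1a, _⟩ := h1
      obtain ⟨_, h2b⟩ := h2
      linarith
    rw [h0]
    simp
  have hP : ∑ x ∈ Finset.Ioo (min u v) (max u v), (μ (PE U pred u v x)).toReal
      ≤ 1 + Real.log M := by
    rw [sum_split pred hpred]
    rw [Finset.sum_eq_zero hPzero, zero_add]
    have e2 := sum_PE_class hUmeas hindep hlaw pred u v 2
    linarith
  have hQ : ∑ x ∈ Finset.Ioo (min u v) (max u v), (μ (QE U pred u v x)).toReal
      ≤ 1 + Real.log M := by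
    rw [sum_split pred hpred]
    rw [Finset.sum_eq_zero hQzero, zero_add]
    have e2 := sum_QE_class hUmeas hindep hlaw pred u v 2
    linarith
  rw [Finset.sum_add_distrib]
  linarith

lemma integrable_ind {s : Set Ω} (hs : MeasurableSet s) :
    Integrable (fun ω => if ω ∈ s then (1:ℝ) else 0) μ := by
  have h : (fun ω => if ω ∈ s then (1:ℝ) else 0) = s.indicator (fun _ => (1:ℝ)) := by
    ext ω; rw [Set.indicator_apply]
  rw [h]
  exact (integrable_const (1:ℝ)).indicator hs

lemma integral_ind {s : Set Ω} (hs : MeasurableSet s) :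
    ∫ ω, (if ω ∈ s then (1:ℝ) else 0) ∂μ = (μ s).toReal := by
  have h : (fun ω => if ω ∈ s then (1:ℝ) else 0) = s.indicator (fun _ => (1:ℝ)) := by
    ext ω; rw [Set.indicator_apply]
  rw [h, MeasureTheory.integral_indicator_const (1:ℝ) hs, smul_eq_mul, mul_one]
  rfl

lemma inj_ae (hUmeas : ∀ i, Measurable (U i))
    (hindep : iIndepFun U μ)
    (hlaw : ∀ i, Measure.map (U i) μ = nu) (pred : Fin n → ℕ) :
    ∀ᵐ ω ∂μ, Function.Injective (fun i => (pred i : ℝ) + U i ω) := by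
  have H : ∀ᵐ ω ∂μ, ∀ i j : Fin n, i ≠ j →
      ¬ (U i ω = U j ω + ((pred j : ℝ) - (pred i : ℝ))) := by
    rw [MeasureTheory.ae_all_iff]
    intro i
    rw [MeasureTheory.ae_all_iff]
    intro j
    by_cases hij : i = j
    · exact MeasureTheory.ae_of_all μ (fun ω h => absurd hij h)
    · have h0 := measure_shift_eq_zero hUmeas hindep hlaw i j hij
        ((pred j : ℝ) - (pred i : ℝ))
      filter_upwards [MeasureTheory.measure_eq_zero_iff_ae_notMem.mp h0] with ω hω
      exact fun _ => hω
  filter_upwards [H] with ω hω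
  intro i j hije
  by_contra hne
  refine hω i j hne ?_
  simp only at hije
  linarith [hije]

/-- Bridge: cardinality of `Pset` as a sum of indicators. -/
lemma card_Pset_eq (pred : Fin n → ℕ) (U : Fin n → Ω → ℝ) (ω : Ω) (u v : Fin n) :
    ((Pset (fun i => (pred i : ℝ) + U i ω) u v).card : ℝ)
      = ∑ x ∈ Finset.Ioo (min u v) (max u v),
          (if ω ∈ PE U pred u v x then (1:ℝ) else 0) := by
  rw [Pset, Finset.card_filter]
  push_cast
  refine Finset.sum_congr rfl fun x _ => ?_
  by_cases hc : ∀ z ∈ Finset.Ico (min u v) x, (pred z : ℝ) + U z ω < (pred x : ℝ) + U x ω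
  · rw [if_pos hc, if_pos (show ω ∈ PE U pred u v x from hc)]
  · rw [if_neg hc, if_neg (show ω ∉ PE U pred u v x from hc)]

lemma card_Qset_eq (pred : Fin n → ℕ) (U : Fin n → Ω → ℝ) (ω : Ω) (u v : Fin n) :
    ((Qset (fun i => (pred i : ℝ) + U i ω) u v).card : ℝ)
      = ∑ x ∈ Finset.Ioo (min u v) (max u v),
          (if ω ∈ QE U pred u v x then (1:ℝ) else 0) := by
  rw [Qset, Finset.card_filter]
  push_cast
  refine Finset.sum_congr rfl fun x _ => ?_
  by_cases hc : ∀ z ∈ Finset.Ioc x (max u v), (pred z : ℝ) + U z ω < (pred x : ℝ) + U x ω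
  · rw [if_pos hc, if_pos (show ω ∈ QE U pred u v x from hc)]
  · rw [if_neg hc, if_neg (show ω ∉ QE U pred u v x from hc)]

end PerPair

set_option maxHeartbeats 2000000 in
/-- Fix constants `c ≥ 1` and `a > 0`. There is a constant `C` such that for all sufficiently
large `n` the following holds. If `W` is a nonnegative demand matrix that is super-sparse with
witness set `S` (`|S| ≤ (ln n)^c` and `∑_{(u,v)∈S} W u v ≥ (1 − a/ln n)·|W|`), and each node
gets B-LASLiN prediction `2` if it appears as a coordinate of a pair of `S` and `1` otherwise,
then the expected total weighted path length of the resulting B-LASLiN network is at most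
`C · ln(ln n) · |W|`. -/
theorem blaslin_super_sparse_consistency
    (c : ℝ) (hc : 1 ≤ c) (a : ℝ) (ha : 0 < a) :
    ∃ C : ℝ, 0 < C ∧ ∃ N : ℕ, ∀ n : ℕ, N ≤ n →
      ∀ (Ω : Type) [MeasurableSpace Ω] (μ : Measure Ω), IsProbabilityMeasure μ →
      ∀ U : Fin n → Ω → ℝ, (∀ i, Measurable (U i)) →
        iIndepFun U μ →
        (∀ i, Measure.map (U i) μ = volume.restrict (Set.Ioo (0 : ℝ) 1)) →
        ∀ W : Fin n → Fin n → ℝ, (∀ u v, 0 ≤ W u v) →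
        ∀ S : Finset (Fin n × Fin n),
          (S.card : ℝ) ≤ Real.log n ^ c →
          (1 - a / Real.log n) * (∑ u : Fin n, ∑ v : Fin n, W u v) ≤
            ∑ q ∈ S, W q.1 q.2 →
          ∫ ω, (∑ u : Fin n, ∑ v : Fin n,
              W u v * (dist
                (fun i => ((if ∃ q ∈ S, q.1 = i ∨ q.2 = i then (2 : ℕ) else 1) : ℝ) + U i ω)
                u v : ℝ)) ∂μ ≤
            C * Real.log (Real.log n) * ∑ u : Fin n, ∑ v : Fin n, W u v := by
  refine ⟨2 * c + 9 * a + 5, by linarith, 16, ?_⟩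
  intro n hn Ω mΩ μ hprob U hUmeas hindep hlaw W hW S hScard hSsum
  haveI := hprob
  classical
  set pred : Fin n → ℕ := fun i => if ∃ q ∈ S, q.1 = i ∨ q.2 = i then 2 else 1 with hpreddef
  have hlaw' : ∀ i, Measure.map (U i) μ = nu := fun i => by rw [hlaw i]; rfl
  have hpred : ∀ i, pred i = 1 ∨ pred i = 2 := by
    intro i
    by_cases h : ∃ q ∈ S, q.1 = i ∨ q.2 = i
    · exact Or.inr (by rw [hpreddef]; simp [h])
    · exact Or.inl (by rw [hpreddef]; simp [h])
  -- abbreviations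
  set L := Real.log n with hLdef
  set LL := Real.log L with hLLdef
  set T := ∑ u : Fin n, ∑ v : Fin n, W u v with hTdef
  have hTnonneg : 0 ≤ T := by
    refine Finset.sum_nonneg fun u _ => Finset.sum_nonneg fun v _ => hW u v
  -- log bounds
  have hexpL : Real.exp 1 ≤ L := by
    have h16 : Real.log 16 ≤ L := by
      rw [hLdef]
      have := log_nat_mono (m := 16) (k := n) hn
      simpa using this
    have hlog16 : Real.log 16 = 4 * Real.log 2 := by
      rw [show (16:ℝ) = 2 ^ (4:ℕ) by norm_num, Real.log_pow]
      norm_num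
    have h2 := Real.log_two_gt_d9
    have h3 := Real.exp_one_lt_d9
    rw [hlog16] at h16
    linarith
  have hL1 : 1 ≤ L := by
    have := Real.exp_one_gt_d9
    linarith
  have hLpos : 0 < L := lt_of_lt_of_le zero_lt_one hL1
  have hLL1 : 1 ≤ LL := by
    rw [hLLdef]
    rw [Real.le_log_iff_exp_le hLpos]
    exact hexpL
  -- expectation abbreviation
  set E : Fin n → Fin n → ℝ := fun u v => 1 + ∑ x ∈ Finset.Ioo (min u v) (max u v),
      ((μ (PE U pred u v x)).toReal + (μ (QE U pred u v x)).toReal) with hEdef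
  have hEgen : ∀ u v : Fin n, E u v ≤ 5 + 4 * L :=
    fun u v => K_bound_general hUmeas hindep hlaw' pred hpred u v
  -- bound on E for pairs of S
  have hES : ∀ q ∈ S, E q.1 q.2 ≤ (5 + 2 * c) * LL := by
    intro q hq
    have hpred2 : ∀ i : Fin n, (∃ q' ∈ S, q'.1 = i ∨ q'.2 = i) → pred i = 2 := by
      intro i hi
      rw [hpreddef]
      simp only [hi, if_pos]
    have hu2 : pred (min q.1 q.2) = 2 := by
      rcases min_choice q.1 q.2 with h | h <;> rw [h]
      · exact hpred2 _ ⟨q, hq, Or.inl rfl⟩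
      · exact hpred2 _ ⟨q, hq, Or.inr rfl⟩
    have hv2 : pred (max q.1 q.2) = 2 := by
      rcases max_choice q.1 q.2 with h | h <;> rw [h]
      · exact hpred2 _ ⟨q, hq, Or.inl rfl⟩
      · exact hpred2 _ ⟨q, hq, Or.inr rfl⟩
    have hbase := K_bound_S hUmeas hindep hlaw' pred hpred q.1 q.2 hu2 hv2
    set M := (Finset.univ.filter (fun i => pred i = 2)).card with hMdef
    have hMle : M ≤ 2 * S.card := by
      have hsub : Finset.univ.filter (fun i => pred i = 2) ⊆
          S.image Prod.fst ∪ S.image Prod.snd := by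
        intro i hi
        have h2 : pred i = 2 := (Finset.mem_filter.mp hi).2
        have hex : ∃ q' ∈ S, q'.1 = i ∨ q'.2 = i := by
          by_contra hne
          rw [hpreddef] at h2
          simp only [hne, if_neg] at h2
          exact absurd h2 (by norm_num)
        obtain ⟨q', hq', hcase⟩ := hex
        rcases hcase with h | h
        · exact Finset.mem_union.mpr (Or.inl (Finset.mem_image.mpr ⟨q', hq', h⟩))
        · exact Finset.mem_union.mpr (Or.inr (Finset.mem_image.mpr ⟨q', hq', h⟩))
      calc M ≤ (S.image Prod.fst ∪ S.image Prod.snd).card := Finset.card_le_card hsub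
        _ ≤ (S.image Prod.fst).card + (S.image Prod.snd).card := Finset.card_union_le _ _
        _ ≤ S.card + S.card := add_le_add (Finset.card_image_le) (Finset.card_image_le)
        _ = 2 * S.card := by ring
    have hlogM : Real.log M ≤ Real.log 2 + c * LL := by
      have hrpow1 : (1:ℝ) ≤ L ^ c := Real.one_le_rpow hL1 (by linarith)
      have hrpowpos : (0:ℝ) < L ^ c := lt_of_lt_of_le zero_lt_one hrpow1
      have hMR : (M : ℝ) ≤ 2 * L ^ c := by
        calc (M : ℝ) ≤ 2 * (S.card : ℝ) := by exact_mod_cast hMle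
          _ ≤ 2 * L ^ c := by rw [hLdef]; linarith [hScard]
      have hlog2Lc : Real.log (2 * L ^ c) = Real.log 2 + c * LL := by
        rw [Real.log_mul two_ne_zero (ne_of_gt hrpowpos), Real.log_rpow hLpos, hLLdef]
      rcases Nat.eq_zero_or_pos M with h0 | hMpos
      · rw [h0]
        simp only [Nat.cast_zero, Real.log_zero]
        rw [← hlog2Lc]
        refine Real.log_nonneg ?_
        linarith
      · rw [← hlog2Lc]
        exact Real.log_le_log (by exact_mod_cast hMpos) hMR
    have hlog2 : Real.log 2 ≤ 1 := by
      have := Real.log_two_lt_d9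
      linarith
    calc E q.1 q.2 ≤ 3 + 2 * Real.log M := hbase
      _ ≤ 3 + 2 * (Real.log 2 + c * LL) := by linarith
      _ ≤ (5 + 2 * c) * LL := by nlinarith [hLL1, hc]
  -- the dominating function
  set K : Fin n → Fin n → Ω → ℝ := fun u v ω =>
    1 + ∑ x ∈ Finset.Ioo (min u v) (max u v),
      ((if ω ∈ PE U pred u v x then (1:ℝ) else 0)
        + (if ω ∈ QE U pred u v x then (1:ℝ) else 0)) with hKdef
  have hPQint : ∀ u v x : Fin n, Integrable (fun ω =>
      (if ω ∈ PE U pred u v x then (1:ℝ) else 0)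
        + (if ω ∈ QE U pred u v x then (1:ℝ) else 0)) μ :=
    fun u v x => (integrable_ind (PE_meas hUmeas pred u v x)).add
      (integrable_ind (QE_meas hUmeas pred u v x))
  have hsumint : ∀ u v : Fin n, Integrable (fun ω =>
      ∑ x ∈ Finset.Ioo (min u v) (max u v),
        ((if ω ∈ PE U pred u v x then (1:ℝ) else 0)
          + (if ω ∈ QE U pred u v x then (1:ℝ) else 0))) μ :=
    fun u v => integrable_finset_sum _ (fun x _ => hPQint u v x)
  have hKint : ∀ u v : Fin n, Integrable (K u v) μ := by
    intro u v
    have : Integrable (fun ω => (1:ℝ) + ∑ x ∈ Finset.Ioo (min u v) (max u v),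
        ((if ω ∈ PE U pred u v x then (1:ℝ) else 0)
          + (if ω ∈ QE U pred u v x then (1:ℝ) else 0))) μ :=
      (integrable_const (1:ℝ)).add (hsumint u v)
    exact this
  have hKE : ∀ u v : Fin n, ∫ ω, K u v ω ∂μ = E u v := by
    intro u v
    have hcalc : ∫ ω, ((1:ℝ) + ∑ x ∈ Finset.Ioo (min u v) (max u v),
        ((if ω ∈ PE U pred u v x then (1:ℝ) else 0)
          + (if ω ∈ QE U pred u v x then (1:ℝ) else 0))) ∂μ
        = 1 + ∑ x ∈ Finset.Ioo (min u v) (max u v),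
            ((μ (PE U pred u v x)).toReal + (μ (QE U pred u v x)).toReal) := by
      rw [MeasureTheory.integral_add (integrable_const (1:ℝ)) (hsumint u v)]
      rw [MeasureTheory.integral_const]
      rw [MeasureTheory.integral_finset_sum _ (fun x _ => hPQint u v x)]
      simp only [probReal_univ, measure_univ, ENNReal.toReal_one, smul_eq_mul, mul_one]
      congr 1
      refine Finset.sum_congr rfl fun x _ => ?_
      rw [MeasureTheory.integral_add (integrable_ind (PE_meas hUmeas pred u v x))
        (integrable_ind (QE_meas hUmeas pred u v x))]
      rw [integral_ind (PE_meas hUmeas pred u v x), integral_ind (QE_meas hUmeas pred u v x)]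
    exact hcalc
  set g : Ω → ℝ := fun ω => ∑ u : Fin n, ∑ v : Fin n, W u v * K u v ω with hgdef
  have hgint : Integrable g μ := by
    refine integrable_finset_sum _ fun u _ => integrable_finset_sum _ fun v _ => ?_
    exact (hKint u v).const_mul (W u v)
  have hgval : ∫ ω, g ω ∂μ = ∑ u : Fin n, ∑ v : Fin n, W u v * E u v := by
    rw [hgdef]
    rw [MeasureTheory.integral_finset_sum _ (fun u _ => integrable_finset_sum _
      (fun v _ => (hKint u v).const_mul (W u v)))]
    refine Finset.sum_congr rfl fun u _ => ?_
    rw [MeasureTheory.integral_finset_sum _ (fun v _ => (hKint u v).const_mul (W u v))]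
    refine Finset.sum_congr rfl fun v _ => ?_
    rw [MeasureTheory.integral_const_mul, hKE]
  -- a.e. domination
  have hae : ∀ᵐ ω ∂μ, (∑ u : Fin n, ∑ v : Fin n,
      W u v * (dist (fun i => (pred i : ℝ) + U i ω) u v : ℝ)) ≤ g ω := by
    filter_upwards [inj_ae hUmeas hindep hlaw' pred] with ω hinj
    refine Finset.sum_le_sum fun u _ => Finset.sum_le_sum fun v _ => ?_
    refine mul_le_mul_of_nonneg_left ?_ (hW u v)
    have hd := dist_le_card hinj u v
    have hdr : (dist (fun i => (pred i : ℝ) + U i ω) u v : ℝ)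
        ≤ 1 + ((Pset (fun i => (pred i : ℝ) + U i ω) u v).card : ℝ)
          + ((Qset (fun i => (pred i : ℝ) + U i ω) u v).card : ℝ) := by
      exact_mod_cast hd
    have hKval : K u v ω = 1 + ((Pset (fun i => (pred i : ℝ) + U i ω) u v).card : ℝ)
        + ((Qset (fun i => (pred i : ℝ) + U i ω) u v).card : ℝ) := by
      rw [card_Pset_eq pred U ω u v, card_Qset_eq pred U ω u v]
      rw [hKdef]
      simp only
      rw [Finset.sum_add_distrib]
      ring
    rw [hKval]
    exact hdr
  -- the demand-weighted sums
  have hSsub : S ⊆ Finset.univ ×ˢ Finset.univ :=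
    fun q _ => Finset.mem_product.mpr ⟨Finset.mem_univ _, Finset.mem_univ _⟩
  have hsplitW : ∑ q ∈ (Finset.univ ×ˢ Finset.univ) \ S, W q.1 q.2 + ∑ q ∈ S, W q.1 q.2
      = T := by
    rw [hTdef, Finset.sum_sdiff hSsub]
    exact Finset.sum_product' _ _ fun u v => W u v
  have hsplitE : ∑ u : Fin n, ∑ v : Fin n, W u v * E u v
      = ∑ q ∈ (Finset.univ ×ˢ Finset.univ) \ S, W q.1 q.2 * E q.1 q.2
        + ∑ q ∈ S, W q.1 q.2 * E q.1 q.2 := by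
    rw [Finset.sum_sdiff hSsub]
    exact (Finset.sum_product' _ _ fun u v => W u v * E u v).symm
  have hoffnonneg : 0 ≤ ∑ q ∈ (Finset.univ ×ˢ Finset.univ) \ S, W q.1 q.2 :=
    Finset.sum_nonneg fun q _ => hW q.1 q.2
  have hSnonneg : 0 ≤ ∑ q ∈ S, W q.1 q.2 :=
    Finset.sum_nonneg fun q _ => hW q.1 q.2
  have hSleT : ∑ q ∈ S, W q.1 q.2 ≤ T := by linarith [hsplitW, hoffnonneg]
  have hoff : ∑ q ∈ (Finset.univ ×ˢ Finset.univ) \ S, W q.1 q.2 ≤ (a / L) * T := by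
    have h1 : (1 - a / L) * T ≤ ∑ q ∈ S, W q.1 q.2 := hSsum
    have hexp : (1 - a / L) * T = T - (a / L) * T := by ring
    linarith [hsplitW]
  -- final bound on ∑ W E
  have hWE : ∑ u : Fin n, ∑ v : Fin n, W u v * E u v
      ≤ (2 * c + 9 * a + 5) * LL * T := by
    rw [hsplitE]
    have hb1 : ∑ q ∈ S, W q.1 q.2 * E q.1 q.2
        ≤ ((5 + 2 * c) * LL) * ∑ q ∈ S, W q.1 q.2 := by
      rw [Finset.mul_sum]
      refine Finset.sum_le_sum fun q hq => ?_
      rw [mul_comm ((5 + 2 * c) * LL) (W q.1 q.2)]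
      exact mul_le_mul_of_nonneg_left (hES q hq) (hW q.1 q.2)
    have hb2 : ∑ q ∈ (Finset.univ ×ˢ Finset.univ) \ S, W q.1 q.2 * E q.1 q.2
        ≤ (5 + 4 * L) * ∑ q ∈ (Finset.univ ×ˢ Finset.univ) \ S, W q.1 q.2 := by
      rw [Finset.mul_sum]
      refine Finset.sum_le_sum fun q hq => ?_
      rw [mul_comm (5 + 4 * L) (W q.1 q.2)]
      exact mul_le_mul_of_nonneg_left (hEgen q.1 q.2) (hW q.1 q.2)
    have hcoef : (0:ℝ) ≤ (5 + 2 * c) * LL := mul_nonneg (by linarith) (by linarith)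
    have hS1 : ((5 + 2 * c) * LL) * ∑ q ∈ S, W q.1 q.2 ≤ ((5 + 2 * c) * LL) * T :=
      mul_le_mul_of_nonneg_left hSleT hcoef
    have h5 : (5 + 4 * L) * ∑ q ∈ (Finset.univ ×ˢ Finset.univ) \ S, W q.1 q.2
        ≤ (5 + 4 * L) * ((a / L) * T) :=
      mul_le_mul_of_nonneg_left hoff (by linarith)
    have hdiv : (5 + 4 * L) * (a / L) ≤ 9 * a := by
      have hLaL : L * (a / L) = a := by field_simp
      have h5L : a / L ≤ a := div_le_self ha.le hL1
      have hALpos : 0 ≤ a / L := div_nonneg ha.le hLpos.le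
      have hexp : (5 + 4 * L) * (a / L) = 5 * (a / L) + 4 * (L * (a / L)) := by ring
      rw [hexp, hLaL]
      linarith
    have hstep : (5 + 4 * L) * ((a / L) * T) ≤ 9 * a * T := by
      calc (5 + 4 * L) * ((a / L) * T) = ((5 + 4 * L) * (a / L)) * T := by ring
        _ ≤ 9 * a * T := mul_le_mul_of_nonneg_right hdiv hTnonneg
    have hlast : 9 * a * T ≤ 9 * a * LL * T := by
      have hkey : (0:ℝ) ≤ 9 * a * ((LL - 1) * T) :=
        mul_nonneg (mul_nonneg (by norm_num) ha.le)
          (mul_nonneg (by linarith) hTnonneg)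
      nlinarith [hkey]
    linarith [hb1, hb2, hS1, h5, hstep, hlast]
  -- conclude
  have hfinal : ∫ ω, (∑ u : Fin n, ∑ v : Fin n,
      W u v * (dist (fun i => (pred i : ℝ) + U i ω) u v : ℝ)) ∂μ
      ≤ (2 * c + 9 * a + 5) * LL * T := by
    by_cases hint : Integrable (fun ω => ∑ u : Fin n, ∑ v : Fin n,
        W u v * (dist (fun i => (pred i : ℝ) + U i ω) u v : ℝ)) μ
    · calc ∫ ω, (∑ u : Fin n, ∑ v : Fin n,
            W u v * (dist (fun i => (pred i : ℝ) + U i ω) u v : ℝ)) ∂μ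
          ≤ ∫ ω, g ω ∂μ := MeasureTheory.integral_mono_ae hint hgint hae
        _ = ∑ u : Fin n, ∑ v : Fin n, W u v * E u v := hgval
        _ ≤ (2 * c + 9 * a + 5) * LL * T := hWE
    · rw [MeasureTheory.integral_undef hint]
      have hC : (0:ℝ) ≤ (2 * c + 9 * a + 5) * LL * T :=
        mul_nonneg (mul_nonneg (by linarith) (by linarith)) hTnonneg
      exact hC
  simp only [hpreddef, Nat.cast_ite, Nat.cast_one] at hfinal
  exact hfinal

end P2P
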